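/- (Stability condition, Lemma 5.1 'Lemma mu1<1' of the paper.) Define the reflection coefficient κ(ρ) = (γ p(ρ) u'(ρ) − c(ρ) p'(ρ)) / (γ p(ρ) u'(ρ) + c(ρ) p'(ρ)) along the compressive branch, where primes denote d/dρ. Then for every ρ ∈ (ρ_r, η ρ_r) one has λ₄(ρ) − s(ρ) > 0, where λ₁(ρ) = u(ρ) − c(ρ) and λ₄(ρ) = u(ρ) + c(ρ), and the strict inequality |κ(ρ)| · |λ₁(ρ) − s(ρ)| / |λ₄(ρ) − s(ρ)| < 1 holds. -/

import Mathlib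

/-!
Along the Hugoniot branch put `M = s - u`, `A = γ p u'` and `B = c p'`, so that `λ₁ - s = -(c + M)`
and `λ₄ - s = c - M`. The claimed bound is `|A - B| (c + M) < (A + B) (c - M)`, which, once
`0 ≤ M < c` (the Lax condition), amounts to the pair `A M < B c` and `B M < A c`. All quantities are
explicit in `ρ` and `√((η ρ_r - ρ) ρ)`; after the square roots cancel, the Lax condition and
`A M < B c` both reduce to `ρ_r < ρ`, while `B M < A c` reduces to
`0 < γ η (ρ - ρ_r) ((η - 2) ρ + ρ_r)`, using `γ (η - 1) = η + 1`.
-/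

open Real

theorem abs_sub_div_add_mul_abs_div_abs_lt_one {A B u c s : ℝ} (hus : u ≤ s) (hsc : s < u + c)
    (hAB : A * (s - u) < B * c) (hBA : B * (s - u) < A * c) :
    |(A - B) / (A + B)| * |u - c - s| / |u + c - s| < 1 := by
  have hcs : 0 < u + c - s := by linarith
  have key : |A - B| * (c + (s - u)) < (A + B) * (u + c - s) := by
    rcases abs_cases (A - B) with ⟨h, -⟩ | ⟨h, -⟩ <;> rw [h] <;> linarith
  have hsum : 0 < A + B :=
    (pos_iff_pos_of_mul_pos ((mul_nonneg (abs_nonneg _) (by linarith)).trans_lt key)).2 hcs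
  rw [abs_div, abs_of_pos hsum, abs_of_nonpos (by linarith : u - c - s ≤ 0), abs_of_pos hcs,
    div_mul_eq_mul_div, div_div, div_lt_one (mul_pos hsum hcs)]
  linarith

theorem hasDerivAt_hugoniot_pressure {η ρr pr x : ℝ} (hx : η * ρr - x ≠ 0) :
    HasDerivAt (fun x => pr * (η * x - ρr) / (η * ρr - x))
      (pr * ρr * (η ^ 2 - 1) / (η * ρr - x) ^ 2) x := by
  refine ((((hasDerivAt_id' x).const_mul η).sub_const ρr).const_mul pr).div
    ((hasDerivAt_id' x).const_sub (η * ρr)) hx |>.congr_deriv ?_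
  field_simp
  ring

theorem hasDerivAt_hugoniot_velocity {η ρr ur K x : ℝ} (hx : 0 < (η * ρr - x) * x) :
    HasDerivAt (fun x => ur + K * (x - ρr) / √((η * ρr - x) * x))
      (K * ρr * (η * x + η * ρr - 2 * x) / (2 * ((η * ρr - x) * x) * √((η * ρr - x) * x))) x := by
  have hg : HasDerivAt (fun x => (η * ρr - x) * x) (η * ρr - 2 * x) x :=
    ((hasDerivAt_id' x).const_sub (η * ρr)).mul (hasDerivAt_id' x) |>.congr_deriv (by ring)
  refine ((((hasDerivAt_id' x).sub_const ρr).const_mul K).div (hg.sqrt hx.ne')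
    (sqrt_pos.2 hx).ne').const_add ur |>.congr_deriv ?_
  have hq := (sqrt_pos.2 hx).ne'
  have hsq := sq_sqrt hx.le
  generalize √((η * ρr - x) * x) = q at hq hsq ⊢
  rw [← hsq]
  field_simp
  linear_combination 2 * K * hsq

theorem hugoniot_shock_speed_sub_velocity {ρ ρr ur K q : ℝ} (h : ρ ≠ ρr) :
    (ρ * (ur + K * (ρ - ρr) / q) - ρr * ur) / (ρ - ρr) - (ur + K * (ρ - ρr) / q)
      = ρr * K / q := by
  have := sub_ne_zero.2 h
  field_simp
  ring

theorem hugoniot_velocity_coeff_sq {γ η ρr pr : ℝ} (hγ : 1 < γ) (hρr : 0 < ρr) (hpr : 0 ≤ pr)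
    (hη : η = (γ + 1) / (γ - 1)) :
    ρr * (√(γ * pr / ρr) * √(2 / (γ - 1))) ^ 2 = pr * (η + 1) := by
  have : γ - 1 ≠ 0 := by linarith
  rw [mul_pow, sq_sqrt (by positivity), sq_sqrt (div_nonneg zero_le_two (by linarith)), hη]
  field_simp
  ring

section Hugoniot

variable {γ η ρr pr K q c ρ : ℝ}

theorem hugoniot_lax_condition {P : ℝ} (hγη : γ * (η - 1) = η + 1) (hγ : 0 < γ) (hη : 0 < η)
    (hpr : 0 < pr) (hρr : 0 < ρr) (hρ : ρr < ρ) (hd : ρ < η * ρr) (hq : 0 < q) (hc : 0 < c)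
    (hK : ρr * K ^ 2 = pr * (η + 1))
    (hP : P = pr * (η * ρ - ρr) / (η * ρr - ρ)) (hc2 : c ^ 2 = γ * P / ρ)
    (hq2 : q ^ 2 = (η * ρr - ρ) * ρ) :
    ρr * K / q < c := by
  have hcq : c ^ 2 * q ^ 2 = γ * pr * (η * ρ - ρr) := by
    have : 0 < ρ := hρr.trans hρ
    have : 0 < η * ρr - ρ := by linarith
    rw [hc2, hq2, hP]; field_simp
  rw [div_lt_iff₀ hq]
  refine lt_of_pow_lt_pow_left₀ 2 (by positivity) ?_
  calc (ρr * K) ^ 2 = γ * pr * (η * ρr - ρr) := by linear_combination ρr * hK - ρr * pr * hγη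
    _ < γ * pr * (η * ρ - ρr) := by gcongr
    _ = (c * q) ^ 2 := by rw [mul_pow, hcq]

theorem hugoniot_reflection_ineq_left {P : ℝ} (hγ : 0 < γ) (hpr : 0 < pr) (hρr : 0 < ρr)
    (hη : 1 < η) (hρ : ρr < ρ) (hd : ρ < η * ρr) (hP : 0 < P)
    (hq2 : q ^ 2 = (η * ρr - ρ) * ρ) (hK : ρr * K ^ 2 = pr * (η + 1)) (hc2 : c ^ 2 = γ * P / ρ) :
    γ * P * (K * ρr * (η * ρ + η * ρr - 2 * ρ) / (2 * ((η * ρr - ρ) * ρ) * q)) * (ρr * K / q)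
      < c * (pr * ρr * (η ^ 2 - 1) / (η * ρr - ρ) ^ 2) * c := by
  have hρ0 : 0 < ρ := hρr.trans hρ
  have hd0 : 0 < η * ρr - ρ := by linarith
  calc γ * P * (K * ρr * (η * ρ + η * ρr - 2 * ρ) / (2 * ((η * ρr - ρ) * ρ) * q)) * (ρr * K / q)
        = γ * P * ρr * (ρr * K ^ 2) * (η * ρ + η * ρr - 2 * ρ)
            / (2 * ((η * ρr - ρ) * ρ) * q ^ 2) := by
          field_simp
    _ = γ * P * pr * ρr * (η + 1) / ((η * ρr - ρ) * ρ) ^ 2 * ((η * ρ + η * ρr - 2 * ρ) / 2) := by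
          rw [hK, hq2]; field_simp
    _ < γ * P * pr * ρr * (η + 1) / ((η * ρr - ρ) * ρ) ^ 2 * ((η - 1) * ρ) := by
          gcongr
          linarith [mul_lt_mul_of_pos_left hρ (by linarith : (0 : ℝ) < η)]
    _ = c ^ 2 * (pr * ρr * (η ^ 2 - 1) / (η * ρr - ρ) ^ 2) := by
          rw [hc2]; field_simp; ring
    _ = c * (pr * ρr * (η ^ 2 - 1) / (η * ρr - ρ) ^ 2) * c := by ring

theorem hugoniot_reflection_ineq_right (hγη : γ * (η - 1) = η + 1) (hγ : 0 < γ) (hpr : 0 < pr)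
    (hρr : 0 < ρr) (hη : 1 < η) (hρ : ρr < ρ) (hd : ρ < η * ρr) (hK : 0 < K) (hq : 0 < q)
    (hc : 0 < c) :
    c * (pr * ρr * (η ^ 2 - 1) / (η * ρr - ρ) ^ 2) * (ρr * K / q)
      < γ * (pr * (η * ρ - ρr) / (η * ρr - ρ))
        * (K * ρr * (η * ρ + η * ρr - 2 * ρ) / (2 * ((η * ρr - ρ) * ρ) * q)) * c := by
  have hρ0 : 0 < ρ := hρr.trans hρ
  have hd0 : 0 < η * ρr - ρ := by linarith
  have core : 2 * ρ * ρr * (η ^ 2 - 1) < γ * (η * ρ - ρr) * (η * ρ + η * ρr - 2 * ρ) := by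
    -- `(η - 2) ρ + ρ_r = (η ρ_r - ρ) + (η - 1) (ρ - ρ_r)`
    have hmid : 0 < (η - 2) * ρ + ρr := by
      linarith [mul_pos (sub_pos.2 hη) (sub_pos.2 hρ)]
    have factor : γ * (η * ρ - ρr) * (η * ρ + η * ρr - 2 * ρ) - 2 * ρ * ρr * (η ^ 2 - 1)
        = γ * η * (ρ - ρr) * ((η - 2) * ρ + ρr) := by
      linear_combination (2 * ρ * ρr * (η - 1)) * hγη
    linarith [mul_pos (mul_pos (mul_pos hγ (by linarith : (0 : ℝ) < η)) (sub_pos.2 hρ)) hmid]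
  suffices h : pr * ρr * (η ^ 2 - 1) / (η * ρr - ρ) ^ 2 * (ρr * K / q)
      < γ * (pr * (η * ρ - ρr) / (η * ρr - ρ))
        * (K * ρr * (η * ρ + η * ρr - 2 * ρ) / (2 * ((η * ρr - ρ) * ρ) * q)) by
    linarith [mul_lt_mul_of_pos_left h hc]
  calc pr * ρr * (η ^ 2 - 1) / (η * ρr - ρ) ^ 2 * (ρr * K / q)
      = pr * ρr * K / ((η * ρr - ρ) ^ 2 * q) * (ρr * (η ^ 2 - 1)) := by field_simp
    _ < pr * ρr * K / ((η * ρr - ρ) ^ 2 * q)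
          * (γ * (η * ρ - ρr) * (η * ρ + η * ρr - 2 * ρ) / (2 * ρ)) := by
      gcongr
      rw [lt_div_iff₀ (by positivity)]
      linarith
    _ = _ := by field_simp

end Hugoniot

/-- Stability condition (Lemma 5.1 of the paper): the reflection coefficient `κ`
satisfies `|κ| |λ₁ − s| / |λ₄ − s| < 1` along the compressive branch, where
`λ₁ = u − c`, `λ₄ = u + c`, and `λ₄ − s > 0`. -/
theorem stmt12 (γ ρr ur pr η cr : ℝ)
    (hγ : 1 < γ) (hρr : 0 < ρr) (hpr : 0 < pr)
    (hη : η = (γ + 1) / (γ - 1))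
    (hcr : cr = Real.sqrt (γ * pr / ρr))
    (p u c s κ : ℝ → ℝ)
    (hp : ∀ ρ, p ρ = pr * (η * ρ - ρr) / (η * ρr - ρ))
    (hu : ∀ ρ, u ρ = ur + cr * Real.sqrt (2 / (γ - 1)) * (ρ - ρr)
        / Real.sqrt ((η * ρr - ρ) * ρ))
    (hc : ∀ ρ, c ρ = Real.sqrt (γ * p ρ / ρ))
    (hs : ∀ ρ, s ρ = (ρ * u ρ - ρr * ur) / (ρ - ρr))
    (hκ : ∀ ρ, κ ρ = (γ * p ρ * deriv u ρ - c ρ * deriv p ρ)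
        / (γ * p ρ * deriv u ρ + c ρ * deriv p ρ)) :
    ∀ ρ ∈ Set.Ioo ρr (η * ρr),
      0 < (u ρ + c ρ) - s ρ
      ∧ |κ ρ| * |(u ρ - c ρ) - s ρ| / |(u ρ + c ρ) - s ρ| < 1 := by
  rintro ρ ⟨hρ, hρη⟩
  have hγ1 : 0 < γ - 1 := by linarith
  have hη1 : 1 < η := by rw [hη, lt_div_iff₀ hγ1]; linarith
  have hγη : γ * (η - 1) = η + 1 := by rw [hη]; field_simp; ring
  have hρ0 : 0 < ρ := hρr.trans hρ
  have hg : 0 < (η * ρr - ρ) * ρ := mul_pos (by linarith) hρ0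
  have hK : ρr * (cr * √(2 / (γ - 1))) ^ 2 = pr * (η + 1) :=
    hcr ▸ hugoniot_velocity_coeff_sq hγ hρr hpr.le hη
  set K := cr * √(2 / (γ - 1))
  have hK0 : 0 < K := mul_pos (by rw [hcr]; positivity) (by positivity)
  set q := √((η * ρr - ρ) * ρ)
  have hq : 0 < q := sqrt_pos.2 hg
  have hq2 : q ^ 2 = (η * ρr - ρ) * ρ := sq_sqrt hg.le
  have hdp := (funext hp ▸ hasDerivAt_hugoniot_pressure (pr := pr) (x := ρ) (by linarith)).deriv
  have hdu := (funext hu ▸ hasDerivAt_hugoniot_velocity (ur := ur) (K := K) hg).deriv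
  have hsu : s ρ - u ρ = ρr * K / q := by
    rw [hs, hu]; exact hugoniot_shock_speed_sub_velocity hρ.ne'
  have hP : 0 < p ρ := by
    rw [hp]; exact div_pos (mul_pos hpr (by nlinarith)) (by linarith)
  have hc0 : 0 < c ρ := by rw [hc]; positivity
  have hc2 : c ρ ^ 2 = γ * p ρ / ρ := by rw [hc]; exact sq_sqrt (by positivity)
  have hlax :=
    hugoniot_lax_condition hγη (by linarith) (by linarith) hpr hρr hρ hρη hq hc0 hK (hp ρ) hc2 hq2
  refine ⟨by linarith, ?_⟩
  rw [hκ, hdp, hdu]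
  have hM : 0 < ρr * K / q := by positivity
  refine abs_sub_div_add_mul_abs_div_abs_lt_one (by linarith) (by linarith) ?_ ?_ <;> rw [hsu]
  · exact hugoniot_reflection_ineq_left (by linarith) hpr hρr hη1 hρ hρη hP hq2 hK hc2
  · rw [hp]
    exact hugoniot_reflection_ineq_right hγη (by linarith) hpr hρr hη1 hρ hρη hK0 hq hc0
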